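/- The finite compactly supported Borel measure μ on ℝ given by μ = λ|_{[0,1]} + δ₂ (Lebesgue measure restricted to [0,1] plus the Dirac point mass at 2) admits no frame measure: there exist no Borel measure ν on ℝ and constants A, B > 0 such that A ‖f‖²_{L²(μ)} ≤ ∫ |(f dμ)^(t)|² dν(t) ≤ B ‖f‖²_{L²(μ)} for all f ∈ L²(μ). -/

import Mathlib

open MeasureTheory Filter Metric Complex Set
open scoped ENNReal NNReal Real Topology

noncomputable section

/-- The Fourier transform of the measure `f dμ` on `ℝ`:
`(f dμ)^(t) = ∫ f(x) e^{-2πi t x} dμ(x)`. -/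
def ftm1 (μ : Measure ℝ) (f : ℝ → ℂ) (t : ℝ) : ℂ :=
  ∫ x, f x * Complex.exp (-(2 * Real.pi * t * x) * Complex.I) ∂μ

/-- `ν` is a Bessel measure for `μ` with bound `B`. -/
def IsBesselBound1 (μ ν : Measure ℝ) (B : ℝ) : Prop :=
  ∀ f : ℝ → ℂ, MemLp f 2 μ →
    ∫⁻ t, (‖ftm1 μ f t‖₊ : ℝ≥0∞) ^ 2 ∂ν ≤ ENNReal.ofReal B * ∫⁻ x, (‖f x‖₊ : ℝ≥0∞) ^ 2 ∂μ

/-- `ν` is a frame measure for `μ` with bounds `A, B`. -/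
def IsFrameBounds1 (μ ν : Measure ℝ) (A B : ℝ) : Prop :=
  ∀ f : ℝ → ℂ, MemLp f 2 μ →
    ENNReal.ofReal A * ∫⁻ x, (‖f x‖₊ : ℝ≥0∞) ^ 2 ∂μ ≤ ∫⁻ t, (‖ftm1 μ f t‖₊ : ℝ≥0∞) ^ 2 ∂ν ∧
    ∫⁻ t, (‖ftm1 μ f t‖₊ : ℝ≥0∞) ^ 2 ∂ν ≤ ENNReal.ofReal B * ∫⁻ x, (‖f x‖₊ : ℝ≥0∞) ^ 2 ∂μ

/-- The interval `x + R·Q` where `Q = [0,1)`. -/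
def cube1 (x R : ℝ) : Set ℝ := Set.Ico x (x + R)

/-- The `α`-upper Beurling density on `ℝ`. -/
def beurlingDensity1 (ν : Measure ℝ) (α : ℝ) : ℝ≥0∞ :=
  limsup (fun R : ℝ => ⨆ x : ℝ, ν (cube1 x R) / ENNReal.ofReal (R ^ α)) atTop

/-- The upper Beurling dimension on `ℝ`. -/
def beurlingDim1 (ν : Measure ℝ) : ℝ≥0∞ :=
  ⨆ (α : ℝ) (_ : 0 ≤ α) (_ : beurlingDensity1 ν α = ∞), ENNReal.ofReal α

/-- The lower Beurling density on `ℝ`: `D⁻(ν) = liminf_{R→∞} inf_x ν(x+RQ)/R`. -/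
def lowerBeurlingDensity1 (ν : Measure ℝ) : ℝ≥0∞ :=
  liminf (fun R : ℝ => ⨅ x : ℝ, ν (cube1 x R) / ENNReal.ofReal R) atTop

/-!
Testing the upper frame bound on the indicator of the atom `{2}`, whose transform has constant
modulus, shows that a frame measure `ν` is finite. The modulates `e^{2πinx} 1_{[0,1]}` all have
norm one, but their transforms are the translates by `n` of the Fourier transform of `1_{[0,1]}`,
which vanishes at infinity by the Riemann–Lebesgue lemma. Dominated convergence against the finite
measure `ν` then drives their `ν`-energies to zero, contradicting the lower frame bound.
-/

open FourierTransform

def modulation (s : ℝ) (f : ℝ → ℂ) (x : ℝ) : ℂ :=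
  Complex.exp (2 * π * s * x * I) * f x

lemma norm_fourierKernel (t x : ℝ) : ‖Complex.exp (-(2 * π * t * x) * I)‖ = 1 := by
  simp [Complex.norm_exp]

lemma norm_modulation (s : ℝ) (f : ℝ → ℂ) (x : ℝ) : ‖modulation s f x‖ = ‖f x‖ := by
  simp [modulation, Complex.norm_exp]

section FourierTransformOfMeasure

variable {μ ν : Measure ℝ} {f : ℝ → ℂ}

lemma norm_ftm1_le (t : ℝ) : ‖ftm1 μ f t‖ ≤ ∫ x, ‖f x‖ ∂μ :=
  (norm_integral_le_integral_norm _).trans_eq <| by simp_rw [norm_mul, norm_fourierKernel, mul_one]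

lemma integrable_mul_fourierKernel (hf : Integrable f μ) (t : ℝ) :
    Integrable (fun x => f x * Complex.exp (-(2 * π * t * x) * I)) μ :=
  hf.mul_bdd (by fun_prop) (.of_forall fun x => (norm_fourierKernel t x).le)

lemma continuous_ftm1 (hf : Integrable f μ) : Continuous (ftm1 μ f) :=
  continuous_of_dominated (fun t => (integrable_mul_fourierKernel hf t).aestronglyMeasurable)
    (fun t => .of_forall fun x => by rw [norm_mul, norm_fourierKernel, mul_one]) hf.norm
    (.of_forall fun x => by fun_prop)

lemma ftm1_add_measure (hf : Integrable f (μ + ν)) (t : ℝ) :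
    ftm1 (μ + ν) f t = ftm1 μ f t + ftm1 ν f t := by
  rw [integrable_add_measure] at hf
  exact integral_add_measure (integrable_mul_fourierKernel hf.1 t)
    (integrable_mul_fourierKernel hf.2 t)

lemma ftm1_dirac (a t : ℝ) :
    ftm1 (Measure.dirac a) f t = f a * Complex.exp (-(2 * π * t * a) * I) :=
  integral_dirac _ a

lemma ftm1_restrict {s : Set ℝ} (hs : MeasurableSet s) :
    ftm1 (μ.restrict s) f = ftm1 μ (s.indicator f) := by
  ext t
  simp only [ftm1, ← integral_indicator hs, indicator_mul_left]

lemma ftm1_volume : ftm1 volume f = 𝓕 f := by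
  ext t
  rw [Real.fourier_real_eq_integral_exp_smul]
  refine integral_congr_ae (.of_forall fun x => ?_)
  dsimp only
  rw [smul_eq_mul, mul_comm]
  congr 2
  push_cast
  ring

lemma ftm1_modulation (s t : ℝ) : ftm1 μ (modulation s f) t = ftm1 μ f (t - s) := by
  simp only [ftm1, modulation]
  congr 1 with x
  rw [mul_comm (Complex.exp _), mul_assoc, ← Complex.exp_add]
  congr 2
  push_cast
  ring

lemma ftm1_restrict_add_dirac_indicator_one {s : Set ℝ} (hs : MeasurableSet s)
    (hvol : volume s ≠ ∞) {a : ℝ} (ha : a ∉ s) :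
    ftm1 (volume.restrict s + Measure.dirac a) (s.indicator 1) = 𝓕 (s.indicator (1 : ℝ → ℂ)) := by
  ext t
  have hint : Integrable (s.indicator (1 : ℝ → ℂ)) (volume.restrict s + Measure.dirac a) :=
    (integrable_indicator_iff hs).2 (integrableOn_const (by simp [hvol, ha]))
  rw [ftm1_add_measure hint, ftm1_dirac, indicator_of_notMem ha, zero_mul, add_zero,
    ftm1_restrict hs, indicator_indicator, inter_self, ftm1_volume]

end FourierTransformOfMeasure

section FrameMeasure

variable {μ ν : Measure ℝ} {f : ℝ → ℂ}

lemma lintegral_nnnorm_indicator_one_sq {s : Set ℝ} (hs : MeasurableSet s) :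
    ∫⁻ x, (‖s.indicator (1 : ℝ → ℂ) x‖₊ : ℝ≥0∞) ^ 2 ∂μ = μ s := by
  have hpt (x : ℝ) : (‖s.indicator (1 : ℝ → ℂ) x‖₊ : ℝ≥0∞) ^ 2 = s.indicator 1 x := by
    by_cases hx : x ∈ s <;> simp [hx]
  simp_rw [hpt]
  exact lintegral_indicator_one hs

lemma norm_ftm1_indicator_singleton (a t : ℝ) :
    ‖ftm1 μ (({a} : Set ℝ).indicator 1) t‖ = μ.real {a} := by
  rw [← ftm1_restrict (measurableSet_singleton a), ftm1, Measure.restrict_singleton,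
    integral_smul_measure, integral_dirac, Pi.one_apply, one_mul, norm_smul, norm_fourierKernel,
    mul_one, Real.norm_of_nonneg ENNReal.toReal_nonneg, measureReal_def]

lemma IsBesselBound1.isFiniteMeasure {B : ℝ} (hB : IsBesselBound1 μ ν B) {a : ℝ}
    (ha : μ {a} ≠ 0) (ha' : μ {a} ≠ ∞) : IsFiniteMeasure ν := by
  have hbound := hB (({a} : Set ℝ).indicator 1)
    (memLp_indicator_const 2 (measurableSet_singleton a) (1 : ℂ) (.inr ha'))
  have hconst (t : ℝ) :
      (‖ftm1 μ (({a} : Set ℝ).indicator 1) t‖₊ : ℝ≥0∞) ^ 2 = μ {a} * μ {a} := by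
    rw [← enorm_eq_nnnorm, ← ofReal_norm, norm_ftm1_indicator_singleton,
      ofReal_measureReal ha', sq]
  simp_rw [hconst, lintegral_const, lintegral_nnnorm_indicator_one_sq (measurableSet_singleton a),
    mul_assoc, mul_comm (ENNReal.ofReal B)] at hbound
  refine ⟨lt_top_iff_ne_top.2 fun hν => ?_⟩
  rw [hν, ENNReal.mul_top ha, ENNReal.mul_top ha, top_le_iff] at hbound
  exact ENNReal.mul_ne_top ha' ENNReal.ofReal_ne_top hbound

lemma memLp_modulation {p : ℝ≥0∞} (hf : MemLp f p μ) (s : ℝ) : MemLp (modulation s f) p μ :=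
  hf.mono ((by fun_prop : Continuous fun x : ℝ => Complex.exp (2 * π * s * x * I))
    |>.aestronglyMeasurable.mul hf.1) (.of_forall fun x => (norm_modulation s f x).le)

lemma lintegral_nnnorm_modulation_sq (s : ℝ) :
    ∫⁻ x, (‖modulation s f x‖₊ : ℝ≥0∞) ^ 2 ∂μ = ∫⁻ x, (‖f x‖₊ : ℝ≥0∞) ^ 2 ∂μ := by
  simp_rw [← enorm_eq_nnnorm, ← ofReal_norm, norm_modulation]

lemma tendsto_lintegral_ftm1_modulation [IsFiniteMeasure ν] (hf : Integrable f μ)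
    (hlim : Tendsto (ftm1 μ f) atBot (𝓝 0)) :
    Tendsto (fun n : ℕ => ∫⁻ t, (‖ftm1 μ (modulation n f) t‖₊ : ℝ≥0∞) ^ 2 ∂ν) atTop (𝓝 0) := by
  simp_rw [ftm1_modulation, ← enorm_eq_nnnorm]
  have hcont := continuous_ftm1 hf
  have hmeas (n : ℕ) : Measurable fun t => ‖ftm1 μ f (t - n)‖ₑ ^ 2 :=
    (hcont.comp (continuous_sub_right _)).measurable.enorm.pow_const 2
  have hbound (n : ℕ) : (fun t => ‖ftm1 μ f (t - n)‖ₑ ^ 2) ≤ᵐ[ν]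
      fun _ => ENNReal.ofReal (∫ x, ‖f x‖ ∂μ) ^ 2 :=
    .of_forall fun t => by
      dsimp only
      rw [← ofReal_norm]
      gcongr
      exact norm_ftm1_le _
  have hpt (t : ℝ) : Tendsto (fun n : ℕ => ‖ftm1 μ f (t - n)‖ₑ ^ 2) atTop (𝓝 0) := by
    have hshift : Tendsto (fun n : ℕ => t - n) atTop atBot := by
      simpa [sub_eq_add_neg] using tendsto_atBot_add_const_left _ t
        (tendsto_neg_atTop_atBot.comp tendsto_natCast_atTop_atTop)
    simpa [Function.comp_def] using
      (((ENNReal.continuous_pow 2).comp continuous_enorm).tendsto 0).comp (hlim.comp hshift)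
  simpa using tendsto_lintegral_of_dominated_convergence _ hmeas hbound
    (by rw [lintegral_const]; exact ENNReal.mul_ne_top (by simp) (measure_ne_top ν _))
    (.of_forall hpt)

theorem not_isFrameBounds1_of_atom [IsFiniteMeasure μ] {a : ℝ} (ha : μ {a} ≠ 0)
    (hf : MemLp f 2 μ) (hf0 : ∫⁻ x, (‖f x‖₊ : ℝ≥0∞) ^ 2 ∂μ ≠ 0)
    (hlim : Tendsto (ftm1 μ f) atBot (𝓝 0)) {A B : ℝ} (hA : 0 < A) :
    ¬ IsFrameBounds1 μ ν A B := by
  intro hframe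
  have := IsBesselBound1.isFiniteMeasure (fun g hg => (hframe g hg).2) ha (measure_ne_top μ _)
  have hlower (n : ℕ) : ENNReal.ofReal A * ∫⁻ x, (‖f x‖₊ : ℝ≥0∞) ^ 2 ∂μ ≤
      ∫⁻ t, (‖ftm1 μ (modulation n f) t‖₊ : ℝ≥0∞) ^ 2 ∂ν := by
    simpa only [lintegral_nnnorm_modulation_sq] using (hframe _ (memLp_modulation hf n)).1
  have := ge_of_tendsto' (tendsto_lintegral_ftm1_modulation (hf.integrable one_le_two) hlim)
    hlower
  exact (ENNReal.mul_pos (ENNReal.ofReal_pos.2 hA).ne' hf0).ne' (nonpos_iff_eq_zero.1 this)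

end FrameMeasure

/-- The measure `μ = λ|_{[0,1]} + δ₂` on `ℝ` admits no frame measure. -/
theorem stmt1 :
    ¬ ∃ (ν : Measure ℝ) (A B : ℝ), 0 < A ∧ 0 < B ∧
      IsFrameBounds1 (volume.restrict (Set.Icc (0 : ℝ) 1) + Measure.dirac 2) ν A B := by
  rintro ⟨ν, A, B, hA, -, hframe⟩
  have hvol : volume (Icc (0 : ℝ) 1) ≠ ∞ := by simp [Real.volume_Icc]
  refine not_isFrameBounds1_of_atom (a := 2) (f := (Icc (0 : ℝ) 1).indicator 1)
    ?_ ?_ ?_ ?_ hA hframe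
  · simp
  · exact memLp_indicator_const 2 measurableSet_Icc (1 : ℂ) (.inr (measure_ne_top _ _))
  · rw [lintegral_nnnorm_indicator_one_sq measurableSet_Icc]
    simp [Real.volume_Icc]
  · rw [ftm1_restrict_add_dirac_indicator_one measurableSet_Icc hvol (by norm_num)]
    exact (Real.zero_at_infty_fourier _).mono_left atBot_le_cocompact
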